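/- A disjoint union (topological sum) X = ⨿_{j∈J} X_j is a Dold space if and only if each summand X_j is a Dold space. -/

import Mathlib

open unitInterval

universe u v w

/-- A partition of unity: continuous `[0,1]`-valued maps whose pointwise sum is `1`. -/
def IsPartitionOfUnity {ι : Type*} {X : Type*} [TopologicalSpace X]
    (f : ι → X → ℝ) : Prop :=
  (∀ i, Continuous (f i)) ∧ (∀ i x, f i x ∈ Set.Icc (0 : ℝ) 1) ∧
    ∀ x, HasSum (fun i => f i x) 1

/-- A cover is numerable if it admits a subordinate partition of unity with
locally finite supports. -/
def IsNumerableCover {ι : Type*} {X : Type*} [TopologicalSpace X]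
    (U : ι → Set X) : Prop :=
  ∃ f : ι → X → ℝ, IsPartitionOfUnity f ∧
    LocallyFinite (fun i => closure (Function.support (f i))) ∧
    ∀ i, closure (Function.support (f i)) ⊆ U i

/-- `U` is ambiently contractible to `x₀`: the inclusion `U → X` is homotopic to the
constant map at `x₀`. -/
def AmbientlyContractibleTo {X : Type*} [TopologicalSpace X] (U : Set X) (x₀ : X) : Prop :=
  ContinuousMap.Homotopic
    (⟨Subtype.val, continuous_subtype_val⟩ : C(U, X))
    (ContinuousMap.const ↥U x₀)

/-- `U ⊆ X` is ambiently contractible: the inclusion `U → X` is nullhomotopic. -/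
def AmbientlyContractible {X : Type*} [TopologicalSpace X] (U : Set X) : Prop :=
  ∃ x₀ : X, AmbientlyContractibleTo U x₀

/-- A Dold space (numerably contractible space): a space admitting a numerable cover
by ambiently contractible subsets. -/
def IsDoldSpace (X : Type u) [TopologicalSpace X] : Prop :=
  ∃ (ι : Type u) (U : ι → Set X),
    (∀ x, ∃ i, x ∈ U i) ∧ IsNumerableCover U ∧ ∀ i, AmbientlyContractible (U i)


/-!
A nonempty summand `X i` is a retract of `Σ j, X j` (send the other summands to a point), and
being Dold passes to retracts: pull the cover back along the inclusion, and contract each piece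
by composing its nullhomotopy with the retraction. An empty summand is Dold through the empty
cover. Conversely, the covers of the summands, with their partitions of unity extended by zero,
assemble into a numerable cover of the sum; its pieces stay contractible since `Sigma.mk i` is an
embedding.
-/

open Function Set Topology

section Pullback

variable {X Y : Type*} [TopologicalSpace X] [TopologicalSpace Y]

lemma IsPartitionOfUnity.comp {ι : Type*} {f : ι → Y → ℝ} (hf : IsPartitionOfUnity f)
    {g : X → Y} (hg : Continuous g) : IsPartitionOfUnity fun i => f i ∘ g :=
  ⟨fun i => (hf.1 i).comp hg, fun i x => hf.2.1 i (g x), fun x => hf.2.2 (g x)⟩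

lemma IsNumerableCover.preimage {ι : Type*} {U : ι → Set Y} (hU : IsNumerableCover U)
    {g : X → Y} (hg : Continuous g) : IsNumerableCover fun i => g ⁻¹' U i := by
  obtain ⟨f, hf, hlf, hsub⟩ := hU
  have hclosure : ∀ i, closure (support (f i ∘ g)) ⊆ g ⁻¹' closure (support (f i)) :=
    fun i => by rw [support_comp_eq_preimage]; exact hg.closure_preimage_subset _
  exact ⟨fun i => f i ∘ g, hf.comp hg, (hlf.preimage_continuous hg).subset hclosure,
    fun i => (hclosure i).trans (preimage_mono (hsub i))⟩

lemma AmbientlyContractible.preimage_of_leftInverse {U : Set Y} (hU : AmbientlyContractible U)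
    (g : C(X, Y)) (r : C(Y, X)) (hrg : LeftInverse r g) : AmbientlyContractible (g ⁻¹' U) := by
  obtain ⟨y₀, hy₀⟩ := hU
  refine ⟨r y₀, ?_⟩
  unfold AmbientlyContractibleTo
  have := (ContinuousMap.Homotopic.refl r).comp
    (hy₀.comp (ContinuousMap.Homotopic.refl (g.restrictPreimage U)))
  convert this using 1 <;> ext x
  · exact (hrg x).symm
  · rfl

lemma AmbientlyContractible.image_of_isEmbedding {U : Set X} (hU : AmbientlyContractible U)
    {g : X → Y} (hg : IsEmbedding g) : AmbientlyContractible (g '' U) := by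
  obtain ⟨x₀, hx₀⟩ := hU
  refine ⟨g x₀, ?_⟩
  unfold AmbientlyContractibleTo
  let e := hg.homeomorphImage U
  have := (ContinuousMap.Homotopic.refl ⟨g, hg.continuous⟩).comp
    (hx₀.comp (ContinuousMap.Homotopic.refl (e.symm : C(g '' U, U))))
  convert this using 1 <;> ext y
  · exact congrArg Subtype.val (e.apply_symm_apply y).symm
  · rfl

end Pullback

lemma IsDoldSpace.of_isEmpty (X : Type u) [TopologicalSpace X] [IsEmpty X] : IsDoldSpace X :=
  ⟨X, fun _ => ∅, isEmptyElim, ⟨fun _ _ => 0, ⟨fun _ => continuous_const, isEmptyElim,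
    isEmptyElim⟩, isEmptyElim, isEmptyElim⟩, isEmptyElim⟩

lemma IsDoldSpace.of_leftInverse {X Y : Type u} [TopologicalSpace X] [TopologicalSpace Y]
    (hY : IsDoldSpace Y) (g : C(X, Y)) (r : C(Y, X)) (hrg : LeftInverse r g) :
    IsDoldSpace X := by
  obtain ⟨κ, U, hcover, hnum, hcontr⟩ := hY
  exact ⟨κ, fun k => g ⁻¹' U k, fun x => hcover (g x), hnum.preimage g.continuous,
    fun k => (hcontr k).preimage_of_leftInverse g r hrg⟩

section Sigma

variable {ι : Type*} {X : ι → Type*}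

lemma extend_sigmaMk_of_ne {Z : Type*} {i j : ι} (hji : j ≠ i) (g : X i → Z)
    (e : (Σ i, X i) → Z) (x : X j) : extend (Sigma.mk i) g e ⟨j, x⟩ = e ⟨j, x⟩ :=
  extend_apply' _ _ _ fun ⟨_, h⟩ => hji (congrArg Sigma.fst h).symm

variable [∀ i, TopologicalSpace (X i)]

lemma continuous_extend_sigmaMk {Z : Type*} [TopologicalSpace Z] {i : ι} {g : X i → Z}
    (hg : Continuous g) {e : (Σ i, X i) → Z} (he : Continuous e) :
    Continuous (extend (Sigma.mk i) g e) := by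
  refine continuous_sigma fun j => ?_
  obtain rfl | hji := eq_or_ne j i
  · simpa only [sigma_mk_injective.extend_apply] using hg
  · simp only [extend_sigmaMk_of_ne hji]
    exact he.comp continuous_sigmaMk

noncomputable def sigmaRetraction (i : ι) (x₀ : X i) : C(Σ j, X j, X i) :=
  ⟨extend (Sigma.mk i) id fun _ => x₀, continuous_extend_sigmaMk continuous_id continuous_const⟩

lemma leftInverse_sigmaRetraction (i : ι) (x₀ : X i) :
    LeftInverse (sigmaRetraction i x₀) (ContinuousMap.sigmaMk i) :=
  sigma_mk_injective.extend_apply id fun _ => x₀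

variable {κ : ι → Type*}

lemma IsPartitionOfUnity.sigma {f : ∀ i, κ i → X i → ℝ} (hf : ∀ i, IsPartitionOfUnity (f i)) :
    IsPartitionOfUnity fun p : Σ i, κ i => extend (Sigma.mk p.1) (f p.1 p.2) 0 := by
  refine ⟨fun p => continuous_extend_sigmaMk ((hf p.1).1 p.2) continuous_const, ?_, ?_⟩
  · rintro ⟨i, k⟩ ⟨j, x⟩
    obtain rfl | hji := eq_or_ne j i
    · simpa only [sigma_mk_injective.extend_apply] using (hf j).2.1 k x
    · simp [extend_sigmaMk_of_ne hji]
  · rintro ⟨j, x⟩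
    refine ((sigma_mk_injective (i := j)).hasSum_iff ?_).mp ?_
    · rintro ⟨i, k⟩ hp
      have hji : j ≠ i := by rintro rfl; exact hp ⟨k, rfl⟩
      simp [extend_sigmaMk_of_ne hji]
    · simpa only [comp_def, sigma_mk_injective.extend_apply] using (hf j).2.2 x

lemma LocallyFinite.sigma_image {C : ∀ i, κ i → Set (X i)} (hC : ∀ i, LocallyFinite (C i)) :
    LocallyFinite fun p : Σ i, κ i => Sigma.mk p.1 '' C p.1 p.2 := by
  rintro ⟨j, x⟩
  obtain ⟨N, hN, hfin⟩ := hC j x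
  refine ⟨Sigma.mk j '' N, isOpenMap_sigmaMk.image_mem_nhds hN,
    (hfin.image (Sigma.mk j)).subset ?_⟩
  rintro ⟨i, k⟩ ⟨_, ⟨y, hy, rfl⟩, z, hz, hzy⟩
  obtain rfl : j = i := congrArg Sigma.fst hzy
  obtain rfl : z = y := sigma_mk_injective hzy
  exact ⟨k, ⟨z, hy, hz⟩, rfl⟩

lemma IsNumerableCover.sigma {U : ∀ i, κ i → Set (X i)} (hU : ∀ i, IsNumerableCover (U i)) :
    IsNumerableCover fun p : Σ i, κ i => Sigma.mk p.1 '' U p.1 p.2 := by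
  choose f hf hlf hsub using hU
  have hclosure : ∀ p : Σ i, κ i, closure (support (extend (Sigma.mk p.1) (f p.1 p.2) 0)) =
      Sigma.mk p.1 '' closure (support (f p.1 p.2)) := fun p => by
    rw [support_extend_zero sigma_mk_injective, IsClosedEmbedding.sigmaMk.closure_image_eq]
  refine ⟨_, IsPartitionOfUnity.sigma hf, ?_, fun p => ?_⟩
  · simpa only [hclosure] using LocallyFinite.sigma_image hlf
  · rw [hclosure]
    exact image_mono (hsub p.1 p.2)

end Sigma

lemma IsDoldSpace.sigma {ι : Type u} {X : ι → Type u} [∀ i, TopologicalSpace (X i)]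
    (hX : ∀ i, IsDoldSpace (X i)) : IsDoldSpace (Σ i, X i) := by
  choose κ U hcover hnum hcontr using hX
  refine ⟨Σ i, κ i, fun p => Sigma.mk p.1 '' U p.1 p.2, fun ⟨i, x⟩ => ?_,
    IsNumerableCover.sigma hnum, fun p => (hcontr p.1 p.2).image_of_isEmbedding .sigmaMk⟩
  obtain ⟨k, hk⟩ := hcover i x
  exact ⟨⟨i, k⟩, mem_image_of_mem _ hk⟩

/-- a disjoint union is Dold iff each summand is Dold. -/
theorem stmt6 {ι : Type u} (X : ι → Type u) [∀ i, TopologicalSpace (X i)] :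
    IsDoldSpace (Σ i, X i) ↔ ∀ i, IsDoldSpace (X i) := by
  refine ⟨fun h i => ?_, IsDoldSpace.sigma⟩
  rcases isEmpty_or_nonempty (X i) with _ | ⟨⟨x₀⟩⟩
  · exact IsDoldSpace.of_isEmpty (X i)
  · exact h.of_leftInverse (ContinuousMap.sigmaMk i) (sigmaRetraction i x₀)
      (leftInverse_sigmaRetraction i x₀)
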